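/- arXiv:1106.4654 — 2 statements merged into one kernel-verified Lean document; each statement's English description precedes it below -/
import Mathlib

section
/- Let A₁, A₂ be self-adjoint operators on Hilbert spaces H₁, H₂ respectively, and let T ∈ B(H₁, H₂) be a bounded operator. Suppose there is C > 0 such that for all integers m, n ∈ ℤ, ‖F(m ≤ A₂ < m+1) T F(n ≤ A₁ < n+1)‖ ≤ C. Then T extends to a bounded operator from B(A₁) to B(A₂)* with ‖T‖_{B(B(A₁), B(A₂)*)} ≤ 2C. -/
open scoped InnerProductSpace ENNReal

noncomputable section

/-- The dyadic radii: `R_0 = 0`, `R_j = 2^(j-1)` for `j ≥ 1`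
(here indexed so that `dyadicR (k+1) = 2^k`). -/
def dyadicR : ℕ → ℝ
  | 0 => 0
  | k + 1 => 2 ^ k

/-- An abstract projection-valued (spectral) measure on `ℝ`, modelling the spectral
resolution of a self-adjoint operator `A` on a complex Hilbert space `H`:
`P S` is the spectral projection of `A` onto the Borel set `S`. -/
structure SpectralMeasure (H : Type*) [NormedAddCommGroup H] [InnerProductSpace ℂ H]
    [CompleteSpace H] where
  P : Set ℝ → H →L[ℂ] H
  inter : ∀ S T : Set ℝ, (P S).comp (P T) = P (S ∩ T)
  symm : ∀ (S : Set ℝ) (u v : H), ⟪P S u, v⟫_ℂ = ⟪u, P S v⟫_ℂ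
  empty : P ∅ = 0
  univ : P Set.univ = ContinuousLinearMap.id ℂ H
  hasSum_iUnion : ∀ S : ℕ → Set ℝ, Pairwise (Function.onFun Disjoint S) →
    ∀ u : H, HasSum (fun n => P (S n) u) (P (⋃ n, S n) u)

variable {H : Type*} [NormedAddCommGroup H] [InnerProductSpace ℂ H] [CompleteSpace H]

/-- The spectral projection `F_j(A)` onto `{R_{j-1} ≤ |A| < R_j}` (0-indexed: `band k`
corresponds to `F_{k+1}`). -/
def SpectralMeasure.band (A : SpectralMeasure H) (k : ℕ) : H →L[ℂ] H :=
  A.P {t : ℝ | dyadicR k ≤ |t| ∧ |t| < dyadicR (k + 1)}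

/-- The Besov norm `‖u‖_B = Σ_j R_j^{1/2} ‖F_j(A) u‖`, valued in `ℝ≥0∞`;
`u ∈ B(A)` precisely when this is finite. -/
def SpectralMeasure.besov (A : SpectralMeasure H) (u : H) : ℝ≥0∞ :=
  ∑' k : ℕ, ENNReal.ofReal (Real.sqrt (dyadicR (k + 1)) * ‖A.band k u‖)

/-!
Split `u` and `v` into their dyadic bands `F_j(A₁) u` and `F_l(A₂) v`. The band `F_j` lives in
`[-R_j, R_j)`, which is covered by `2 R_j` unit intervals. On each pair of unit intervals `T` has
norm at most `C`, and the pieces of `F_j u` in distinct unit intervals are orthogonal, so by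
Cauchy–Schwarz the sum of their norms is at most `√(2 R_j) ‖F_j u‖`. Hence
`|⟨F_l v, T F_j u⟩| ≤ 2C (R_j^{1/2} ‖F_j u‖) (R_l^{1/2} ‖F_l v‖)`, and summing over `j` and `l`
gives the bound.
-/

open Set

lemma biUnion_Ico_intCast_inter {S : Set ℝ} {N : ℕ} (h : S ⊆ Ico (-(N : ℝ)) N) :
    ⋃ n ∈ Finset.Ico (-(N : ℤ)) N, Ico (n : ℝ) (n + 1) ∩ S = S := by
  refine Subset.antisymm (iUnion₂_subset fun _ _ => inter_subset_right) fun t ht => ?_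
  obtain ⟨hlo, hhi⟩ := h ht
  refine mem_iUnion₂.mpr ⟨⌊t⌋, ?_, ⟨Int.floor_le t, Int.lt_floor_add_one t⟩, ht⟩
  rw [Finset.mem_Ico, Int.le_floor, Int.floor_lt]
  push_cast
  exact ⟨hlo, hhi⟩

lemma pairwiseDisjoint_Ico_intCast_inter (S : Set ℝ) (s : Set ℤ) :
    s.PairwiseDisjoint fun n => Ico (n : ℝ) (n + 1) ∩ S := fun _ _ _ _ hmn =>
  (pairwise_disjoint_Ico_intCast ℝ hmn).mono inter_subset_left inter_subset_left

lemma dyadicR_monotone : Monotone dyadicR := by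
  refine monotone_nat_of_le_succ fun k => ?_
  cases k with
  | zero => exact pow_nonneg zero_le_two 0
  | succ k => exact pow_le_pow_right₀ one_le_two k.le_succ

lemma pairwise_disjoint_abs_preimage_Ico_dyadicR :
    Pairwise (Function.onFun Disjoint fun k => abs ⁻¹' Ico (dyadicR k) (dyadicR (k + 1))) :=
  fun _ _ hij => (dyadicR_monotone.pairwise_disjoint_on_Ico_succ hij).preimage _

lemma iUnion_abs_preimage_Ico_dyadicR : ⋃ k, abs ⁻¹' Ico (dyadicR k) (dyadicR (k + 1)) = univ := by
  refine eq_univ_of_forall fun t => ?_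
  obtain ⟨k, hk⟩ := pow_unbounded_of_one_lt |t| one_lt_two
  have hmem : |t| ∈ Ico (dyadicR 0) (dyadicR (k + 1)) := ⟨abs_nonneg t, hk⟩
  obtain ⟨i, -, hi⟩ := mem_iUnion₂.mp (Ico_subset_biUnion_Ico (k + 1) dyadicR hmem)
  exact mem_iUnion.mpr ⟨i, hi⟩

lemma abs_preimage_Ico_dyadicR_subset (k : ℕ) :
    abs ⁻¹' Ico (dyadicR k) (dyadicR (k + 1)) ⊆ Ico (-((2 ^ k : ℕ) : ℝ)) ((2 ^ k : ℕ) : ℝ) := by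
  intro t ht
  push_cast
  exact ⟨(abs_lt.mp ht.2).1.le, (abs_lt.mp ht.2).2⟩

namespace SpectralMeasure

variable (A : SpectralMeasure H)

lemma P_P_apply (S T : Set ℝ) (u : H) : A.P S (A.P T u) = A.P (S ∩ T) u :=
  DFunLike.congr_fun (A.inter S T) u

lemma P_P_apply_of_subset {S T : Set ℝ} (h : T ⊆ S) (u : H) : A.P S (A.P T u) = A.P T u := by
  rw [P_P_apply, inter_eq_right.mpr h]

lemma norm_P_apply_sq (S : Set ℝ) (u : H) : ‖A.P S u‖ ^ 2 = RCLike.re ⟪u, A.P S u⟫_ℂ := by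
  rw [norm_sq_eq_re_inner (𝕜 := ℂ), A.symm, P_P_apply, inter_self]

lemma P_union_apply {S T : Set ℝ} (h : Disjoint S T) (u : H) :
    A.P (S ∪ T) u = A.P S u + A.P T u := by
  let pieces : ℕ → Set ℝ := fun n => if n = 0 then S else if n = 1 then T else ∅
  have hdisj : Pairwise (Function.onFun Disjoint pieces) := by
    rintro (_ | _ | i) (_ | _ | j) hij <;> simp_all [pieces, Function.onFun, h.symm]
  have hunion : (⋃ n, pieces n) = S ∪ T := by
    ext t
    simp only [mem_iUnion, mem_union]
    constructor
    · rintro ⟨_ | _ | n, hn⟩ <;> simp_all [pieces]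
    · rintro (ht | ht)
      exacts [⟨0, by simpa [pieces]⟩, ⟨1, by simpa [pieces]⟩]
  have hsum : HasSum (fun n => A.P (pieces n) u) (A.P S u + A.P T u) := by
    have hzero : ∀ n ∉ ({0, 1} : Finset ℕ), A.P (pieces n) u = 0 := by
      rintro (_ | _ | n) hn
      · simp at hn
      · simp at hn
      · simp [pieces, A.empty]
    simpa [pieces] using hasSum_sum_of_ne_finset_zero hzero
  exact (hunion ▸ A.hasSum_iUnion pieces hdisj u).unique hsum

lemma P_biUnion_apply {ι : Type*} (s : Finset ι) {f : ι → Set ℝ}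
    (hf : (s : Set ι).PairwiseDisjoint f) (u : H) :
    A.P (⋃ i ∈ s, f i) u = ∑ i ∈ s, A.P (f i) u := by
  classical
  induction s using Finset.induction_on with
  | empty => simp [A.empty]
  | insert a s ha ih =>
    rw [Finset.coe_insert, pairwiseDisjoint_insert] at hf
    have hdisj : Disjoint (f a) (⋃ i ∈ s, f i) :=
      disjoint_iUnion₂_right.mpr fun i hi => hf.2 i hi fun hai => ha (hai ▸ hi)
    rw [Finset.set_biUnion_insert, A.P_union_apply hdisj, Finset.sum_insert ha, ih hf.1]

lemma sum_norm_P_apply_sq {ι : Type*} (s : Finset ι) {f : ι → Set ℝ}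
    (hf : (s : Set ι).PairwiseDisjoint f) (u : H) :
    ∑ i ∈ s, ‖A.P (f i) u‖ ^ 2 = ‖A.P (⋃ i ∈ s, f i) u‖ ^ 2 := by
  rw [norm_P_apply_sq, A.P_biUnion_apply s hf, inner_sum, map_sum]
  exact Finset.sum_congr rfl fun i _ => A.norm_P_apply_sq (f i) u

lemma sum_norm_P_apply_le {ι : Type*} (s : Finset ι) {f : ι → Set ℝ}
    (hf : (s : Set ι).PairwiseDisjoint f) (u : H) :
    ∑ i ∈ s, ‖A.P (f i) u‖ ≤ √(s.card : ℝ) * ‖A.P (⋃ i ∈ s, f i) u‖ := by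
  rw [← Real.sqrt_sq (norm_nonneg (A.P _ u)), ← Real.sqrt_mul (Nat.cast_nonneg _),
    Real.le_sqrt (Finset.sum_nonneg fun _ _ => norm_nonneg _) (by positivity),
    ← A.sum_norm_P_apply_sq s hf]
  exact sq_sum_le_card_mul_sum_sq

lemma P_apply_eq_sum_Ico_intCast_inter {S : Set ℝ} {N : ℕ} (h : S ⊆ Ico (-(N : ℝ)) N) (u : H) :
    A.P S u = ∑ n ∈ Finset.Ico (-(N : ℤ)) N, A.P (Ico (n : ℝ) (n + 1) ∩ S) u := by
  rw [← A.P_biUnion_apply _ (pairwiseDisjoint_Ico_intCast_inter S _), biUnion_Ico_intCast_inter h]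

lemma sum_norm_P_apply_Ico_intCast_inter_le {S : Set ℝ} {N : ℕ} (h : S ⊆ Ico (-(N : ℝ)) N)
    (u : H) :
    ∑ n ∈ Finset.Ico (-(N : ℤ)) N, ‖A.P (Ico (n : ℝ) (n + 1) ∩ S) u‖ ≤ √2 * √N * ‖A.P S u‖ := by
  have hcard : √((Finset.Ico (-(N : ℤ)) N).card : ℝ) = √2 * √N := by
    rw [Int.card_Ico, sub_neg_eq_add, ← two_mul, ← Real.sqrt_mul zero_le_two]
    norm_cast
  have := A.sum_norm_P_apply_le (Finset.Ico (-(N : ℤ)) N)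
    (pairwiseDisjoint_Ico_intCast_inter S _) u
  rwa [biUnion_Ico_intCast_inter h, hcard] at this

lemma hasSum_band (u : H) : HasSum (fun k => A.band k u) u := by
  have := A.hasSum_iUnion _ pairwise_disjoint_abs_preimage_Ico_dyadicR u
  rwa [iUnion_abs_preimage_Ico_dyadicR, A.univ] at this

end SpectralMeasure

lemma norm_inner_sum_sum_le {𝕜 E F ι κ : Type*} [RCLike 𝕜]
    [SeminormedAddCommGroup E] [InnerProductSpace 𝕜 E]
    [SeminormedAddCommGroup F] [InnerProductSpace 𝕜 F]
    (T : E →L[𝕜] F) (s : Finset ι) (t : Finset κ) (x : ι → E) (y : κ → F) {C : ℝ}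
    (hC : ∀ i ∈ s, ∀ j ∈ t, ‖⟪y j, T (x i)⟫_𝕜‖ ≤ C * ‖y j‖ * ‖x i‖) :
    ‖⟪∑ j ∈ t, y j, T (∑ i ∈ s, x i)⟫_𝕜‖ ≤ C * (∑ j ∈ t, ‖y j‖) * ∑ i ∈ s, ‖x i‖ := by
  rw [map_sum, sum_inner, mul_assoc, Finset.sum_mul_sum, Finset.mul_sum]
  refine (norm_sum_le _ _).trans (Finset.sum_le_sum fun j hj => ?_)
  rw [inner_sum, Finset.mul_sum]
  refine (norm_sum_le _ _).trans (Finset.sum_le_sum fun i hi => ?_)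
  rw [← mul_assoc]
  exact hC i hi j hj

lemma enorm_inner_le_tsum_tsum {𝕜 E F : Type*} [RCLike 𝕜]
    [SeminormedAddCommGroup E] [InnerProductSpace 𝕜 E]
    [SeminormedAddCommGroup F] [InnerProductSpace 𝕜 F]
    (T : E →L[𝕜] F) {x : ℕ → E} {y : ℕ → F} {u : E} {v : F} (hu : HasSum x u) (hv : HasSum y v) :
    ‖⟪v, T u⟫_𝕜‖ₑ ≤ ∑' l, ∑' j, ‖⟪y l, T (x j)⟫_𝕜‖ₑ := by
  have hsum_v : HasSum (fun l => ⟪y l, T u⟫_𝕜) ⟪v, T u⟫_𝕜 := (innerSLFlip 𝕜 (T u)).hasSum hv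
  have hsum_u : ∀ l, HasSum (fun j => ⟪y l, T (x j)⟫_𝕜) ⟪y l, T u⟫_𝕜 :=
    fun l => ((innerSL 𝕜 (y l)).comp T).hasSum hu
  calc ‖⟪v, T u⟫_𝕜‖ₑ ≤ ∑' l, ‖⟪y l, T u⟫_𝕜‖ₑ := hsum_v.tsum_eq ▸ enorm_tsum_le_tsum_enorm
    _ ≤ ∑' l, ∑' j, ‖⟪y l, T (x j)⟫_𝕜‖ₑ :=
      ENNReal.tsum_le_tsum fun l => (hsum_u l).tsum_eq ▸ enorm_tsum_le_tsum_enorm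

section Blocks

variable {H₁ H₂ : Type*}
  [NormedAddCommGroup H₁] [InnerProductSpace ℂ H₁] [CompleteSpace H₁]
  [NormedAddCommGroup H₂] [InnerProductSpace ℂ H₂] [CompleteSpace H₂]
  (A₁ : SpectralMeasure H₁) (A₂ : SpectralMeasure H₂) (T : H₁ →L[ℂ] H₂) {C : ℝ}

lemma norm_inner_P_apply_T_P_apply_le_of_subset {E₁ E₂ S₁ S₂ : Set ℝ}
    (hC : ‖(A₂.P E₂).comp (T.comp (A₁.P E₁))‖ ≤ C) (h₁ : S₁ ⊆ E₁) (h₂ : S₂ ⊆ E₂)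
    (u : H₁) (v : H₂) :
    ‖⟪A₂.P S₂ v, T (A₁.P S₁ u)⟫_ℂ‖ ≤ C * ‖A₂.P S₂ v‖ * ‖A₁.P S₁ u‖ := by
  have hblock : ⟪A₂.P S₂ v, T (A₁.P S₁ u)⟫_ℂ
      = ⟪A₂.P S₂ v, ((A₂.P E₂).comp (T.comp (A₁.P E₁))) (A₁.P S₁ u)⟫_ℂ := by
    rw [ContinuousLinearMap.comp_apply, ContinuousLinearMap.comp_apply, ← A₂.symm,
      A₂.P_P_apply_of_subset h₂, A₁.P_P_apply_of_subset h₁]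
  rw [hblock, mul_comm C, mul_assoc]
  exact (norm_inner_le_norm _ _).trans
    (mul_le_mul_of_nonneg_left (ContinuousLinearMap.le_of_opNorm_le _ hC _) (norm_nonneg _))

lemma norm_inner_P_apply_T_P_apply_le
    (hC : ∀ m n : ℤ, ‖(A₂.P (Ico m (m + 1))).comp (T.comp (A₁.P (Ico n (n + 1))))‖ ≤ C)
    {S₁ S₂ : Set ℝ} {N₁ N₂ : ℕ} (h₁ : S₁ ⊆ Ico (-(N₁ : ℝ)) N₁) (h₂ : S₂ ⊆ Ico (-(N₂ : ℝ)) N₂)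
    (u : H₁) (v : H₂) :
    ‖⟪A₂.P S₂ v, T (A₁.P S₁ u)⟫_ℂ‖ ≤ 2 * C * (√N₁ * ‖A₁.P S₁ u‖) * (√N₂ * ‖A₂.P S₂ v‖) := by
  have hC0 : 0 ≤ C := (norm_nonneg _).trans (hC 0 0)
  calc ‖⟪A₂.P S₂ v, T (A₁.P S₁ u)⟫_ℂ‖
      ≤ C * (∑ m ∈ Finset.Ico (-(N₂ : ℤ)) N₂, ‖A₂.P (Ico (m : ℝ) (m + 1) ∩ S₂) v‖)
          * ∑ n ∈ Finset.Ico (-(N₁ : ℤ)) N₁, ‖A₁.P (Ico (n : ℝ) (n + 1) ∩ S₁) u‖ := by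
        rw [A₁.P_apply_eq_sum_Ico_intCast_inter h₁, A₂.P_apply_eq_sum_Ico_intCast_inter h₂]
        exact norm_inner_sum_sum_le T _ _ _ _ fun n _ m _ =>
          norm_inner_P_apply_T_P_apply_le_of_subset A₁ A₂ T (hC m n) inter_subset_left
            inter_subset_left u v
    _ ≤ C * (√2 * √N₂ * ‖A₂.P S₂ v‖) * (√2 * √N₁ * ‖A₁.P S₁ u‖) := by
        gcongr
        exacts [A₂.sum_norm_P_apply_Ico_intCast_inter_le h₂ v,
          A₁.sum_norm_P_apply_Ico_intCast_inter_le h₁ u]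
    _ = 2 * C * (√N₁ * ‖A₁.P S₁ u‖) * (√N₂ * ‖A₂.P S₂ v‖) := by
        linear_combination (C * (√N₁ * ‖A₁.P S₁ u‖) * (√N₂ * ‖A₂.P S₂ v‖))
          * Real.mul_self_sqrt zero_le_two

lemma norm_inner_band_T_band_le
    (hC : ∀ m n : ℤ, ‖(A₂.P (Ico m (m + 1))).comp (T.comp (A₁.P (Ico n (n + 1))))‖ ≤ C)
    (j l : ℕ) (u : H₁) (v : H₂) :
    ‖⟪A₂.band l v, T (A₁.band j u)⟫_ℂ‖ ≤
      2 * C * (√(dyadicR (j + 1)) * ‖A₁.band j u‖) * (√(dyadicR (l + 1)) * ‖A₂.band l v‖) := by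
  have := norm_inner_P_apply_T_P_apply_le A₁ A₂ T hC (abs_preimage_Ico_dyadicR_subset j)
    (abs_preimage_Ico_dyadicR_subset l) u v
  push_cast at this
  exact this

end Blocks

/-- if all the blocks `F(m ≤ A₂ < m+1) T F(n ≤ A₁ < n+1)` are bounded
by `C` in operator norm, then `T : B(A₁) → B(A₂)*` with norm at most `2C`, i.e.
`|⟨v, Tu⟩| ≤ 2C ‖u‖_{B(A₁)} ‖v‖_{B(A₂)}` for all `u, v`. -/
theorem stmt6 {H₁ H₂ : Type*}
    [NormedAddCommGroup H₁] [InnerProductSpace ℂ H₁] [CompleteSpace H₁]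
    [NormedAddCommGroup H₂] [InnerProductSpace ℂ H₂] [CompleteSpace H₂]
    (A₁ : SpectralMeasure H₁) (A₂ : SpectralMeasure H₂)
    (T : H₁ →L[ℂ] H₂) (C : ℝ)
    (hC : ∀ m n : ℤ,
      ‖(A₂.P {t : ℝ | (m : ℝ) ≤ t ∧ t < (m : ℝ) + 1}).comp
        (T.comp (A₁.P {t : ℝ | (n : ℝ) ≤ t ∧ t < (n : ℝ) + 1}))‖ ≤ C) :
    ∀ (u : H₁) (v : H₂),
      ENNReal.ofReal ‖⟪v, T u⟫_ℂ‖ ≤ ENNReal.ofReal (2 * C) * A₁.besov u * A₂.besov v := by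
  intro u v
  have hC0 : 0 ≤ 2 * C := by linarith [(norm_nonneg _).trans (hC 0 0)]
  calc ENNReal.ofReal ‖⟪v, T u⟫_ℂ‖
      ≤ ∑' l, ∑' j, ENNReal.ofReal ‖⟪A₂.band l v, T (A₁.band j u)⟫_ℂ‖ := by
        simpa only [ofReal_norm] using
          enorm_inner_le_tsum_tsum T (A₁.hasSum_band u) (A₂.hasSum_band v)
    _ ≤ ∑' l, ∑' j, ENNReal.ofReal (2 * C)
          * ENNReal.ofReal (√(dyadicR (j + 1)) * ‖A₁.band j u‖)
          * ENNReal.ofReal (√(dyadicR (l + 1)) * ‖A₂.band l v‖) := by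
        gcongr with l j
        rw [← ENNReal.ofReal_mul hC0, ← ENNReal.ofReal_mul (by positivity)]
        exact ENNReal.ofReal_le_ofReal (norm_inner_band_T_band_le A₁ A₂ T hC j l u v)
    _ = ENNReal.ofReal (2 * C) * A₁.besov u * A₂.besov v := by
        simp only [SpectralMeasure.besov, ENNReal.tsum_mul_right, ENNReal.tsum_mul_left]
end
end

section
/- Let A₁, A₂ be self-adjoint operators on a Hilbert space H such that ⟨A₂⟩^s ⟨A₁⟩^{-s} is a bounded operator for some s > 1/2. Then B(A₁) ⊆ B(A₂) and there is a constant C > 0 with ‖u‖_{B(A₂)} ≤ C ‖u‖_{B(A₁)} for all u ∈ B(A₁). -/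
open scoped InnerProductSpace ENNReal

noncomputable section

variable {H : Type*} [NormedAddCommGroup H] [InnerProductSpace ℂ H] [CompleteSpace H]

/-- The spectrally-localized weighted square norm `Σ_j ⟨R_j⟩^{2s} ‖F_j(A) u‖²`,
an equivalent expression (uniformly over the dyadic blocks) for `‖⟨A⟩^s u‖²`. -/
def SpectralMeasure.weightedSq (A : SpectralMeasure H) (s : ℝ) (u : H) : ℝ≥0∞ :=
  ∑' k : ℕ, ENNReal.ofReal ((dyadicR (k + 1) ^ 2 + 1) ^ s * ‖A.band k u‖ ^ 2)

/-! Decompose `u = ∑ⱼ F_j(A₁) u`. Testing the hypothesis on a single block `F_j(A₁) u` gives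
`‖F_k(A₂) F_j(A₁) u‖ ≲ (R_j / R_k)^s ‖F_j(A₁) u‖`, and trivially
`‖F_k(A₂) F_j(A₁) u‖ ≤ ‖F_j(A₁) u‖`.
So the Besov weights see the matrix `(R_k / R_j)^{1/2} min(1, (R_k / R_j)^{-s})`, whose entries
decay geometrically in `|k - j|` on both sides precisely because `s > 1/2`; its column sums are
therefore uniformly bounded, and Schur's test in `ℓ¹` gives the estimate. -/

open Set

lemma one_le_dyadicR_succ (k : ℕ) : 1 ≤ dyadicR (k + 1) := one_le_pow₀ one_le_two

lemma not_bddAbove_range_dyadicR : ¬BddAbove (range dyadicR) := by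
  rintro ⟨b, hb⟩
  obtain ⟨k, hk⟩ := pow_unbounded_of_one_lt b one_lt_two
  exact hk.not_ge (hb ⟨k + 1, rfl⟩)

lemma dyadicR_succ_div_dyadicR_succ (k j : ℕ) :
    dyadicR (k + 1) / dyadicR (j + 1) = 2 ^ ((k : ℤ) - j) := by
  rw [zpow_sub₀ two_ne_zero, zpow_natCast, zpow_natCast]
  rfl

def dyadicShell (k : ℕ) : Set ℝ := (fun t => |t|) ⁻¹' Ico (dyadicR k) (dyadicR (k + 1))

lemma pairwise_disjoint_dyadicShell : Pairwise (Function.onFun Disjoint dyadicShell) :=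
  dyadicR_monotone.pairwise_disjoint_on_Ico_succ.mono fun _ _ h => h.preimage _

lemma iUnion_dyadicShell : ⋃ k, dyadicShell k = univ := by
  have h := iUnion_Ico_map_succ_eq_Ici (fun k => dyadicR_monotone (Nat.zero_le k))
    not_bddAbove_range_dyadicR
  simp only [Nat.bot_eq_zero, Order.succ_eq_add_one] at h
  simp only [dyadicShell, ← preimage_iUnion, h]
  ext t
  simp [dyadicR]

namespace SpectralMeasure

variable (A : SpectralMeasure H)

lemma band_eq (k : ℕ) : A.band k = A.P (dyadicShell k) := rfl

lemma P_apply_P_apply_of_disjoint {S T : Set ℝ} (h : Disjoint S T) (u : H) :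
    A.P S (A.P T u) = 0 := by
  rw [← ContinuousLinearMap.comp_apply, A.inter, h.inter_eq, A.empty, zero_apply]

lemma P_apply_P_apply_self (S : Set ℝ) (u : H) : A.P S (A.P S u) = A.P S u := by
  rw [← ContinuousLinearMap.comp_apply, A.inter, inter_self]

lemma norm_P_apply_le (S : Set ℝ) (u : H) : ‖A.P S u‖ ≤ ‖u‖ := by
  have hsq : ‖A.P S u‖ ^ 2 ≤ ‖u‖ * ‖A.P S u‖ :=
    calc ‖A.P S u‖ ^ 2 = RCLike.re ⟪u, A.P S u⟫_ℂ := by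
          rw [← inner_self_eq_norm_sq (𝕜 := ℂ), A.symm, P_apply_P_apply_self]
      _ ≤ ‖⟪u, A.P S u⟫_ℂ‖ := RCLike.re_le_norm _
      _ ≤ ‖u‖ * ‖A.P S u‖ := norm_inner_le_norm _ _
  nlinarith [norm_nonneg (A.P S u), norm_nonneg u]

lemma band_apply_band_apply_of_ne {k j : ℕ} (h : k ≠ j) (u : H) :
    A.band k (A.band j u) = 0 :=
  A.P_apply_P_apply_of_disjoint (pairwise_disjoint_dyadicShell h) u

lemma weightedSq_band (s : ℝ) (j : ℕ) (u : H) :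
    A.weightedSq s (A.band j u) =
      ENNReal.ofReal ((dyadicR (j + 1) ^ 2 + 1) ^ s * ‖A.band j u‖ ^ 2) := by
  rw [weightedSq, tsum_eq_single j fun k hk => by simp [A.band_apply_band_apply_of_ne hk],
    band_eq, P_apply_P_apply_self]

lemma ofReal_le_weightedSq (s : ℝ) (k : ℕ) (u : H) :
    ENNReal.ofReal ((dyadicR (k + 1) ^ 2 + 1) ^ s * ‖A.band k u‖ ^ 2) ≤ A.weightedSq s u :=
  ENNReal.le_tsum k

end SpectralMeasure

theorem ENNReal.tsum_le_mul_tsum_of_le_tsum_mul {α β : Type*} {x : α → ℝ≥0∞} {y : β → ℝ≥0∞}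
    {K : α → β → ℝ≥0∞} {C : ℝ≥0∞} (hx : ∀ a, x a ≤ ∑' b, K a b * y b)
    (hK : ∀ b, ∑' a, K a b ≤ C) : ∑' a, x a ≤ C * ∑' b, y b :=
  calc ∑' a, x a ≤ ∑' a, ∑' b, K a b * y b := ENNReal.tsum_le_tsum hx
    _ = ∑' b, (∑' a, K a b) * y b := by
      rw [ENNReal.tsum_comm]; simp only [ENNReal.tsum_mul_right]
    _ ≤ ∑' b, C * y b := ENNReal.tsum_le_tsum fun b => mul_le_mul_left (hK b) _
    _ = C * ∑' b, y b := ENNReal.tsum_mul_left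

lemma rpow_sq_le_sq_add_one_rpow {x s : ℝ} (hx : 0 ≤ x) (hs : 0 ≤ s) :
    (x ^ s) ^ 2 ≤ (x ^ 2 + 1) ^ s := by
  rw [Real.rpow_pow_comm hx]
  exact Real.rpow_le_rpow (by positivity) (by linarith) hs

lemma sq_add_one_rpow_le {x s : ℝ} (hx : 1 ≤ x) (hs : 0 ≤ s) :
    (x ^ 2 + 1) ^ s ≤ 2 ^ s * (x ^ s) ^ 2 := by
  rw [Real.rpow_pow_comm (by linarith), ← Real.mul_rpow zero_le_two (by positivity)]
  exact Real.rpow_le_rpow (by positivity) (by nlinarith) hs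

def dyadicKernel (s q : ℝ) : ℝ := √q * min 1 (q ^ (-s))

lemma dyadicKernel_nonneg (s : ℝ) {q : ℝ} (hq : 0 ≤ q) : 0 ≤ dyadicKernel s q := by
  unfold dyadicKernel
  have := Real.rpow_nonneg hq (-s)
  positivity

lemma dyadicKernel_one (s : ℝ) : dyadicKernel s 1 = 1 := by
  simp [dyadicKernel]

lemma dyadicKernel_two_pow {s : ℝ} (hs : 0 ≤ s) (m : ℕ) :
    dyadicKernel s (2 ^ m) = (2 ^ (1 / 2 - s) : ℝ) ^ m := by
  have hle : (2 ^ m : ℝ) ^ (-s) ≤ 1 :=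
    Real.rpow_le_one_of_one_le_of_nonpos (one_le_pow₀ one_le_two) (by linarith)
  rw [dyadicKernel, min_eq_right hle, Real.sqrt_eq_rpow, ← Real.rpow_add (by positivity),
    ← Real.rpow_pow_comm zero_le_two, ← sub_eq_add_neg]

lemma dyadicKernel_two_zpow_neg {s : ℝ} (hs : 0 ≤ s) (m : ℕ) :
    dyadicKernel s ((2 : ℝ) ^ (-(m : ℤ))) = ((2 : ℝ) ^ (-(1 / 2) : ℝ)) ^ m := by
  have hle : 1 ≤ ((2 : ℝ) ^ (-(m : ℤ))) ^ (-s) := by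
    rw [zpow_neg, zpow_natCast, Real.inv_rpow (by positivity), ← Real.rpow_neg (by positivity),
      neg_neg]
    exact Real.one_le_rpow (one_le_pow₀ one_le_two) hs
  rw [dyadicKernel, min_eq_left hle, mul_one, zpow_neg, zpow_natCast, Real.sqrt_eq_rpow,
    Real.inv_rpow (by positivity), ← Real.rpow_neg (by positivity),
    ← Real.rpow_pow_comm zero_le_two]

lemma summable_dyadicKernel_two_zpow {s : ℝ} (hs : 1 / 2 < s) :
    Summable fun n : ℤ => dyadicKernel s (2 ^ n) := by
  have hs0 : 0 ≤ s := by linarith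
  refine Summable.of_nat_of_neg ?_ ?_
  · simp only [zpow_natCast, dyadicKernel_two_pow hs0]
    exact summable_geometric_of_lt_one (by positivity)
      (Real.rpow_lt_one_of_one_lt_of_neg one_lt_two (by linarith))
  · simp only [dyadicKernel_two_zpow_neg hs0]
    exact summable_geometric_of_lt_one (by positivity)
      (Real.rpow_lt_one_of_one_lt_of_neg one_lt_two (by norm_num))

lemma rpow_mul_le_of_sq_add_one_rpow_mul_sq_le {s N x y a b : ℝ} (hs : 0 ≤ s) (hN : 1 ≤ N)
    (hx : 0 ≤ x) (hy : 1 ≤ y) (ha : 0 ≤ a) (hb : 0 ≤ b)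
    (hw : (x ^ 2 + 1) ^ s * b ^ 2 ≤ N * ((y ^ 2 + 1) ^ s * a ^ 2)) :
    x ^ s * b ≤ 2 ^ s * N * (y ^ s * a) := by
  have hM : 1 ≤ 2 ^ s * N := one_le_mul_of_one_le_of_one_le (Real.one_le_rpow one_le_two hs) hN
  have hy0 : 0 ≤ y ^ s * a := by positivity
  refine (pow_le_pow_iff_left₀ (by positivity) (by positivity) two_ne_zero).mp ?_
  calc (x ^ s * b) ^ 2 = (x ^ s) ^ 2 * b ^ 2 := mul_pow _ _ _
    _ ≤ (x ^ 2 + 1) ^ s * b ^ 2 := by gcongr; exact rpow_sq_le_sq_add_one_rpow hx hs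
    _ ≤ N * ((y ^ 2 + 1) ^ s * a ^ 2) := hw
    _ ≤ N * (2 ^ s * (y ^ s) ^ 2 * a ^ 2) := by gcongr; exact sq_add_one_rpow_le hy hs
    _ = (2 ^ s * N) * (y ^ s * a) ^ 2 := by ring
    _ ≤ (2 ^ s * N) ^ 2 * (y ^ s * a) ^ 2 := by gcongr; nlinarith
    _ = (2 ^ s * N * (y ^ s * a)) ^ 2 := by ring

lemma sqrt_mul_le_dyadicKernel_mul {s M x y a b : ℝ} (hM : 1 ≤ M) (hx : 0 < x)
    (hy : 0 < y) (ha : 0 ≤ a) (hba : b ≤ a) (hxy : x ^ s * b ≤ M * (y ^ s * a)) :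
    √x * b ≤ M * dyadicKernel s (x / y) * (√y * a) := by
  have hxs : 0 < x ^ s := Real.rpow_pos_of_pos hx s
  have hdecay : b ≤ M * (x / y) ^ (-s) * a := by
    rw [Real.rpow_neg (by positivity), Real.div_rpow hx.le hy.le, inv_div]
    calc b = x ^ s * b / x ^ s := by field_simp
      _ ≤ M * (y ^ s * a) / x ^ s := by gcongr
      _ = M * (y ^ s / x ^ s) * a := by ring
  have hmin : b ≤ M * min 1 ((x / y) ^ (-s)) * a := by
    rcases min_choice 1 ((x / y) ^ (-s)) with h | h <;> rw [h]
    · nlinarith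
    · exact hdecay
  calc √x * b = √(x / y) * √y * b := by
        rw [Real.sqrt_div' _ hy.le, div_mul_cancel₀ _ (by positivity)]
    _ ≤ √(x / y) * √y * (M * min 1 ((x / y) ^ (-s)) * a) := by gcongr
    _ = M * dyadicKernel s (x / y) * (√y * a) := by rw [dyadicKernel]; ring

namespace SpectralMeasure

variable (A₁ A₂ : SpectralMeasure H) {s N : ℝ}

lemma weight_mul_norm_band_band_sq_le (hN : 0 ≤ N)
    (hrel : ∀ u : H, A₂.weightedSq s u ≤ ENNReal.ofReal N * A₁.weightedSq s u) (k j : ℕ) (u : H) :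
    (dyadicR (k + 1) ^ 2 + 1) ^ s * ‖A₂.band k (A₁.band j u)‖ ^ 2 ≤
      N * ((dyadicR (j + 1) ^ 2 + 1) ^ s * ‖A₁.band j u‖ ^ 2) := by
  have h := (A₂.ofReal_le_weightedSq s k _).trans (hrel (A₁.band j u))
  rwa [A₁.weightedSq_band, ← ENNReal.ofReal_mul hN,
    ENNReal.ofReal_le_ofReal_iff (by positivity)] at h

lemma sqrt_mul_norm_band_band_le (hs : 0 ≤ s) (hN : 1 ≤ N)
    (hrel : ∀ u : H, A₂.weightedSq s u ≤ ENNReal.ofReal N * A₁.weightedSq s u) (k j : ℕ) (u : H) :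
    √(dyadicR (k + 1)) * ‖A₂.band k (A₁.band j u)‖ ≤
      2 ^ s * N * dyadicKernel s (dyadicR (k + 1) / dyadicR (j + 1)) *
        (√(dyadicR (j + 1)) * ‖A₁.band j u‖) := by
  have hxj := one_le_dyadicR_succ j
  have hxk := one_le_dyadicR_succ k
  refine sqrt_mul_le_dyadicKernel_mul
    (one_le_mul_of_one_le_of_one_le (Real.one_le_rpow one_le_two hs) hN)
    (by linarith) (by linarith) (norm_nonneg _) (A₂.norm_P_apply_le _ _) ?_
  exact rpow_mul_le_of_sq_add_one_rpow_mul_sq_le hs hN (by linarith) hxj (norm_nonneg _)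
    (norm_nonneg _) (weight_mul_norm_band_band_sq_le A₁ A₂ (by linarith) hrel k j u)

theorem besov_le_of_weightedSq_le (hs : 1 / 2 < s) (hN : 1 ≤ N)
    (hrel : ∀ u : H, A₂.weightedSq s u ≤ ENNReal.ofReal N * A₁.weightedSq s u) (u : H) :
    A₂.besov u ≤ ENNReal.ofReal (2 ^ s * N * ∑' n : ℤ, dyadicKernel s (2 ^ n)) * A₁.besov u := by
  set M : ℝ := 2 ^ s * N
  have hs0 : 0 ≤ s := by linarith
  have hM : 0 ≤ M := mul_nonneg (by positivity) (by linarith)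
  refine ENNReal.tsum_le_mul_tsum_of_le_tsum_mul
    (K := fun k j => ENNReal.ofReal (M * dyadicKernel s (dyadicR (k + 1) / dyadicR (j + 1))))
    (fun k => ?_) (fun j => ?_)
  · have htri : ‖A₂.band k u‖ₑ ≤ ∑' j, ‖A₂.band k (A₁.band j u)‖ₑ :=
      ((A₂.band k).hasSum (A₁.hasSum_band u)).tsum_eq ▸ enorm_tsum_le_tsum_enorm
    calc ENNReal.ofReal (√(dyadicR (k + 1)) * ‖A₂.band k u‖)
        ≤ ∑' j, ENNReal.ofReal (√(dyadicR (k + 1)) * ‖A₂.band k (A₁.band j u)‖) := by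
          simp only [ENNReal.ofReal_mul (Real.sqrt_nonneg _), ofReal_norm, ENNReal.tsum_mul_left]
          gcongr
      _ ≤ _ := by
          gcongr with j
          rw [← ENNReal.ofReal_mul' (by positivity)]
          exact ENNReal.ofReal_le_ofReal
            ((A₁.sqrt_mul_norm_band_band_le A₂ hs0 hN hrel k j u).trans_eq (by ring))
  · have hinj : Function.Injective fun k : ℕ => (k : ℤ) - j := fun a b h => by simpa using h
    calc ∑' k, ENNReal.ofReal (M * dyadicKernel s (dyadicR (k + 1) / dyadicR (j + 1)))
        = ENNReal.ofReal M * ∑' k : ℕ, ENNReal.ofReal (dyadicKernel s (2 ^ ((k : ℤ) - j))) := by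
          simp only [ENNReal.ofReal_mul hM, dyadicR_succ_div_dyadicR_succ, ENNReal.tsum_mul_left]
      _ ≤ ENNReal.ofReal M * ∑' n : ℤ, ENNReal.ofReal (dyadicKernel s (2 ^ n)) := by
          gcongr
          exact ENNReal.tsum_comp_le_tsum_of_injective hinj
            fun n : ℤ => ENNReal.ofReal (dyadicKernel s (2 ^ n))
      _ = ENNReal.ofReal (M * ∑' n : ℤ, dyadicKernel s (2 ^ n)) := by
          rw [ENNReal.ofReal_mul hM, ENNReal.ofReal_tsum_of_nonneg
            (fun n => dyadicKernel_nonneg s (by positivity)) (summable_dyadicKernel_two_zpow hs)]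

end SpectralMeasure

/-- if `⟨A₂⟩^s ⟨A₁⟩^{-s}` is bounded for some `s > 1/2` — expressed
spectrally as `‖⟨A₂⟩^s u‖² ≤ N ‖⟨A₁⟩^s u‖²` for all `u`, in terms of the equivalent
block norms — then `B(A₁) ⊆ B(A₂)` and `‖u‖_{B(A₂)} ≤ C ‖u‖_{B(A₁)}` on `B(A₁)`. -/
theorem stmt9 (A₁ A₂ : SpectralMeasure H) (s : ℝ) (hs : 1 / 2 < s) (N : ℝ)
    (hrel : ∀ u : H, A₂.weightedSq s u ≤ ENNReal.ofReal N * A₁.weightedSq s u) :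
    ∃ C > (0 : ℝ), ∀ u : H,
      (A₁.besov u ≠ ⊤ → A₂.besov u ≠ ⊤) ∧
      A₂.besov u ≤ ENNReal.ofReal C * A₁.besov u := by
  have hrel' (u : H) : A₂.weightedSq s u ≤ ENNReal.ofReal (max N 1) * A₁.weightedSq s u :=
    (hrel u).trans (by gcongr; exact le_max_left N 1)
  have hsum_pos : 0 < ∑' n : ℤ, dyadicKernel s (2 ^ n) :=
    (summable_dyadicKernel_two_zpow hs).tsum_pos (fun _ => dyadicKernel_nonneg s (by positivity))
      0 (by simp [dyadicKernel_one])
  refine ⟨2 ^ s * max N 1 * ∑' n : ℤ, dyadicKernel s (2 ^ n), mul_pos (by positivity) hsum_pos,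
    fun u => ?_⟩
  have hle := A₁.besov_le_of_weightedSq_le A₂ hs (le_max_right N 1) hrel' u
  exact ⟨fun h => ne_top_of_le_ne_top (ENNReal.mul_ne_top ENNReal.ofReal_ne_top h) hle, hle⟩
end
end
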